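/- arXiv:1701.06191 — 7 statements merged into one kernel-verified Lean document; each statement's English description precedes it below -/
import Mathlib

section
/- Let a ≥ 0 and 0 ≤ γ < 1/(1/3 + a/2). Then a·√(ψ(γ)/2) < 1, where ψ(γ) = γe^γ - e^γ + 1. -/
/-!
Both `ψ(t) = t eᵗ - eᵗ + 1` and `t² / (2 (1 - t/3)²)` vanish at `0`, with derivatives `t eᵗ` and
`t / (1 - t/3)³`; since `(1 - t/3)³ ≤ e⁻ᵗ`, the second of these derivatives dominates on `[0, 3)`, so
`ψ(γ) ≤ γ² / (2 (1 - γ/3)²)` and `√(ψ(γ)/2) ≤ γ / (2 (1 - γ/3))`. The hypothesis on `γ` says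
exactly that `a γ < 2 (1 - γ/3)`.
-/

open Real

lemma exp_mul_one_sub_div_pow_le_one {n : ℕ} {t : ℝ} (ht : t ≤ n) :
    exp t * (1 - t / n) ^ n ≤ 1 :=
  calc exp t * (1 - t / n) ^ n ≤ exp t * exp (-t) := by
        gcongr; exact one_sub_div_pow_le_exp_neg ht
    _ = 1 := by rw [← exp_add, add_neg_cancel, exp_zero]

lemma hasDerivAt_mul_exp_sub_exp_add_one (x : ℝ) :
    HasDerivAt (fun t ↦ t * exp t - exp t + 1) (x * exp x) x :=
  ((((hasDerivAt_id' x).fun_mul (hasDerivAt_exp x)).fun_sub (hasDerivAt_exp x)).add_const 1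
    ).congr_deriv (by ring)

lemma hasDerivAt_sq_div_two_mul_one_sub_div_three_sq {x : ℝ} (hx : x ≠ 3) :
    HasDerivAt (fun t ↦ t ^ 2 / (2 * (1 - t / 3) ^ 2)) (x / (1 - x / 3) ^ 3) x := by
  have hx' : 1 - x / 3 ≠ 0 := by
    intro h; apply hx; linarith
  have hden := ((((hasDerivAt_id' x).div_const 3).const_sub 1).fun_pow 2).const_mul 2
  refine ((hasDerivAt_pow 2 x).fun_div hden (by positivity)).congr_deriv ?_
  field_simp
  ring

lemma mul_exp_sub_exp_add_one_le {x : ℝ} (hx₀ : 0 ≤ x) (hx₃ : x < 3) :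
    x * exp x - exp x + 1 ≤ x ^ 2 / (2 * (1 - x / 3) ^ 2) := by
  set g : ℝ → ℝ := fun t ↦ t ^ 2 / (2 * (1 - t / 3) ^ 2) - (t * exp t - exp t + 1)
  have hg : ∀ t < 3, HasDerivAt g (t / (1 - t / 3) ^ 3 - t * exp t) t := fun t ht ↦
    (hasDerivAt_sq_div_two_mul_one_sub_div_three_sq ht.ne).sub
      (hasDerivAt_mul_exp_sub_exp_add_one t)
  have hg' : ∀ t ∈ Set.Ioo (0 : ℝ) 3, 0 ≤ t / (1 - t / 3) ^ 3 - t * exp t := by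
    rintro t ⟨ht₀, ht₃⟩
    have hpos : 0 < 1 - t / 3 := by linarith
    have hexp : exp t * (1 - t / 3) ^ 3 ≤ 1 := by
      exact_mod_cast exp_mul_one_sub_div_pow_le_one (n := 3) (by exact_mod_cast ht₃.le)
    rw [sub_nonneg, le_div_iff₀ (by positivity), mul_assoc]
    exact mul_le_of_le_one_right ht₀.le hexp
  have hmono : MonotoneOn g (Set.Ico 0 3) := by
    refine monotoneOn_of_hasDerivWithinAt_nonneg (f' := fun t ↦ t / (1 - t / 3) ^ 3 - t * exp t)
      (convex_Ico 0 3)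
      (fun t ht ↦ (hg t ht.2).continuousAt.continuousWithinAt) (fun t ht ↦ ?_) (fun t ht ↦ ?_)
    · rw [interior_Ico] at ht
      exact (hg t ht.2).hasDerivWithinAt
    · rw [interior_Ico] at ht
      exact hg' t ht
  have := hmono ⟨le_rfl, by norm_num⟩ ⟨hx₀, hx₃⟩ hx₀
  simpa [g] using this

lemma sqrt_mul_exp_sub_exp_add_one_div_two_le {x : ℝ} (hx₀ : 0 ≤ x) (hx₃ : x < 3) :
    √((x * exp x - exp x + 1) / 2) ≤ x / (2 * (1 - x / 3)) := by
  have hpos : 0 < 1 - x / 3 := by linarith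
  rw [sqrt_le_left (by positivity), div_pow, mul_pow]
  calc (x * exp x - exp x + 1) / 2 ≤ x ^ 2 / (2 * (1 - x / 3) ^ 2) / 2 := by
        gcongr; exact mul_exp_sub_exp_add_one_le hx₀ hx₃
    _ = x ^ 2 / (2 ^ 2 * (1 - x / 3) ^ 2) := by rw [div_div]; ring_nf

theorem stmt_1 (a γ : ℝ) (ha : 0 ≤ a) (h0 : 0 ≤ γ) (h1 : γ < 1 / (1/3 + a/2)) :
    a * Real.sqrt ((γ * Real.exp γ - Real.exp γ + 1) / 2) < 1 := by
  have hγ : γ * (1/3 + a/2) < 1 := (lt_div_iff₀ (by positivity)).1 h1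
  have hγ₃ : γ < 3 := by linarith [mul_nonneg h0 ha]
  calc a * √((γ * exp γ - exp γ + 1) / 2) ≤ a * (γ / (2 * (1 - γ / 3))) := by
        gcongr; exact sqrt_mul_exp_sub_exp_add_one_div_two_le h0 hγ₃
    _ < 1 := by
        rw [mul_div_assoc', div_lt_one (by linarith)]
        linarith
end

section
/- Let a ≥ 0 and 0 < γ < 1/(1/3 + a/2). Then ψ(γ)/(γ²(1 - a√(ψ(γ)/2))²) ≤ 1/(2(1 - (1/3 + a/2)γ)²), where ψ(γ) = γe^γ - e^γ + 1. -/
/-!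
Let `s = √(ψ(γ)/2)`. Because `(1 - x/3)³ ≤ e^{-x}`, the derivative `ψ'(x) = x e^x` is at most
`27x/(3 - x)³`, the derivative of `9x²/(2(3 - x)²)`; both functions vanish at `0`, so
`ψ(γ) ≤ 9γ²/(2(3 - γ)²)`, i.e. `2s(3 - γ) ≤ 3γ`. Dividing by 3 and subtracting `a s γ` gives
`2s(1 - (1/3 + a/2)γ) ≤ γ(1 - a s)`, and squaring this is the claim.
-/

open Real Set

noncomputable def psi (x : ℝ) : ℝ := x * exp x - exp x + 1

lemma hasDerivAt_psi (x : ℝ) : HasDerivAt psi (x * exp x) x :=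
  ((((hasDerivAt_id' x).mul (hasDerivAt_exp x)).sub (hasDerivAt_exp x)).add_const 1).congr_deriv
    (by ring)

lemma hasDerivAt_psi_bound {x : ℝ} (hx : x ≠ 3) :
    HasDerivAt (fun x => 9 * x ^ 2 / (2 * (3 - x) ^ 2)) (27 * x / (3 - x) ^ 3) x := by
  have h3 : 3 - x ≠ 0 := sub_ne_zero.mpr hx.symm
  have hnum : HasDerivAt (fun x : ℝ => 9 * x ^ 2) (18 * x) x :=
    ((hasDerivAt_pow 2 x).const_mul 9).congr_deriv (by ring)
  have hden : HasDerivAt (fun x : ℝ => 2 * (3 - x) ^ 2) (-(4 * (3 - x))) x :=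
    ((((hasDerivAt_id' x).const_sub 3).pow 2).const_mul 2).congr_deriv (by push_cast; ring)
  refine (hnum.div hden (by positivity)).congr_deriv ?_
  field_simp
  ring

lemma three_sub_pow_three_mul_exp_le {x : ℝ} (hx : x ≤ 3) : (3 - x) ^ 3 * exp x ≤ 27 := by
  have hcube : (1 - x / 3) ^ 3 ≤ exp (-x) := by
    calc (1 - x / 3) ^ 3 ≤ exp (-(x / 3)) ^ 3 := by
          gcongr
          · linarith
          · linarith [add_one_le_exp (-(x / 3))]
      _ = exp (-x) := by rw [← exp_nat_mul]; ring_nf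
  calc (3 - x) ^ 3 * exp x = 27 * ((1 - x / 3) ^ 3 * exp x) := by ring
    _ ≤ 27 * (exp (-x) * exp x) := by gcongr
    _ = 27 := by rw [← exp_add, neg_add_cancel, exp_zero, mul_one]

lemma psi_le {γ : ℝ} (h0 : 0 ≤ γ) (h3 : γ < 3) : psi γ ≤ 9 * γ ^ 2 / (2 * (3 - γ) ^ 2) := by
  have hlt : ∀ x ∈ Icc 0 γ, x < 3 := fun x hx => hx.2.trans_lt h3
  refine image_le_of_deriv_right_le_deriv_boundary
    (fun x _ => (hasDerivAt_psi x).continuousAt.continuousWithinAt)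
    (fun x _ => (hasDerivAt_psi x).hasDerivWithinAt) (by simp [psi])
    (fun x hx => (hasDerivAt_psi_bound (hlt x hx).ne).continuousAt.continuousWithinAt)
    (fun x hx => (hasDerivAt_psi_bound (hlt x (Ico_subset_Icc_self hx)).ne).hasDerivWithinAt)
    (fun x hx => ?_) ⟨h0, le_rfl⟩
  have hx3 : x < 3 := hlt x (Ico_subset_Icc_self hx)
  rw [le_div_iff₀ (pow_pos (sub_pos.mpr hx3) 3)]
  linear_combination mul_le_mul_of_nonneg_left (three_sub_pow_three_mul_exp_le hx3.le) hx.1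

lemma psi_nonneg (x : ℝ) : 0 ≤ psi x := by
  have h : (1 - x) * exp x ≤ 1 := by
    calc (1 - x) * exp x ≤ exp (-x) * exp x := by
          gcongr; linarith [add_one_le_exp (-x)]
      _ = 1 := by rw [← exp_add, neg_add_cancel, exp_zero]
  unfold psi
  linarith

lemma two_mul_sqrt_half_psi_mul_le {γ : ℝ} (h0 : 0 ≤ γ) :
    2 * √(psi γ / 2) * (3 - γ) ≤ 3 * γ := by
  rcases le_or_gt 3 γ with h3 | h3
  · nlinarith [sqrt_nonneg (psi γ / 2)]
  have hsq : (2 * √(psi γ / 2) * (3 - γ)) ^ 2 = 2 * (3 - γ) ^ 2 * psi γ := by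
    rw [mul_pow, mul_pow, sq_sqrt (by linarith [psi_nonneg γ])]
    ring
  have hψ := psi_le h0 h3
  rw [le_div_iff₀ (by nlinarith)] at hψ
  refine le_of_sq_le_sq ?_ (by positivity)
  linear_combination hsq + hψ

theorem stmt_2 (a γ : ℝ) (ha : 0 ≤ a) (h0 : 0 < γ) (h1 : γ < 1 / (1/3 + a/2)) :
    (γ * Real.exp γ - Real.exp γ + 1) /
      (γ ^ 2 * (1 - a * Real.sqrt ((γ * Real.exp γ - Real.exp γ + 1) / 2)) ^ 2)
      ≤ 1 / (2 * (1 - (1/3 + a/2) * γ) ^ 2) := by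
  have hcγ : 0 < 1 - (1/3 + a/2) * γ := by
    rw [lt_div_iff₀ (by positivity)] at h1
    linarith
  have hγ3 : γ < 3 := by nlinarith
  change psi γ / (γ ^ 2 * (1 - a * √(psi γ / 2)) ^ 2) ≤ _
  set s := √(psi γ / 2)
  have hs0 : 0 ≤ s := sqrt_nonneg _
  have hψ : psi γ = 2 * s ^ 2 := by rw [sq_sqrt (by linarith [psi_nonneg γ])]; ring
  have hs : 2 * s * (3 - γ) ≤ 3 * γ := two_mul_sqrt_half_psi_mul_le h0.le
  have has : 0 < 1 - a * s := by nlinarith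
  have hkey : 2 * s * (1 - (1/3 + a/2) * γ) ≤ γ * (1 - a * s) := by linear_combination hs / 3
  have hkey0 : 0 ≤ 2 * s * (1 - (1/3 + a/2) * γ) := by positivity
  rw [hψ, div_le_div_iff₀ (by positivity) (by positivity)]
  linear_combination mul_self_le_mul_self hkey0 hkey
end

section
/- For natural numbers m < n, the ratio ((n choose m) - (n-m choose m))/(n choose m) equals m·Σ_{l=1}^{m} (1/(n-m+l))·Π_{k=1}^{l-1} (n-2m+k)/(n-m+k), and this is at most m²/(n-m). -/
/-!
Writing binomial coefficients through descending factorials gives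
`(n-m choose m)/(n choose m) = ∏_{k=1}^m (n-2m+k)/(n-m+k)`, and `1 - ∏ c_k` telescopes into
`∑_l (∏_{k<l} c_k)(1 - c_l)` with `1 - c_l = m/(n-m+l)`. If `2m ≤ n` every factor lies in `[0,1]`,
so each summand is at most `1/(n-m)`; otherwise `n - m < m ≤ m²` and the ratio is trivially at most `1`.
-/

open Finset

-- For `a < b` both sides vanish: the factor `k = b - a` on the right is zero.
theorem Nat.cast_descFactorial_eq_prod_Icc {R : Type*} [CommRing R] (a b : ℕ) :
    (a.descFactorial b : R) = ∏ k ∈ Icc 1 b, ((a : R) - b + k) := by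
  rw [← descPochhammer_eval_eq_descFactorial, descPochhammer_eval_eq_prod_range]
  refine prod_nbij' (fun j ↦ b - j) (fun k ↦ b - k) ?_ ?_ ?_ ?_ ?_ <;>
    simp only [mem_range, mem_Icc]
  · intros; omega
  · intros; omega
  · intros; omega
  · intros; omega
  · intro j hj
    rw [Nat.cast_sub hj.le]
    ring

theorem one_sub_prod_Icc_eq_sum {R : Type*} [CommRing R] (c : ℕ → R) (m : ℕ) :
    1 - ∏ k ∈ Icc 1 m, c k = ∑ l ∈ Icc 1 m, (∏ k ∈ Icc 1 (l - 1), c k) * (1 - c l) := by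
  induction m with
  | zero => simp
  | succ m ih =>
    rw [sum_Icc_succ_top (by omega), prod_Icc_succ_top (by omega), ← ih, Nat.add_sub_cancel]
    ring

section

variable {n m : ℕ}

theorem choose_sub_div_choose_eq_prod (hmn : m ≤ n) :
    ((n - m).choose m : ℝ) / n.choose m
      = ∏ k ∈ Icc 1 m, (((n : ℝ) - 2 * m + k) / ((n : ℝ) - m + k)) := by
  have hfact : (m.factorial : ℝ) ≠ 0 := by positivity
  rw [prod_div_distrib, ← mul_div_mul_left _ _ hfact]
  push_cast [← Nat.cast_mul, ← Nat.descFactorial_eq_factorial_mul_choose,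
    Nat.cast_descFactorial_eq_prod_Icc, Nat.cast_sub hmn]
  ring_nf

theorem one_sub_choose_div_choose_eq_sum (hmn : m ≤ n) :
    ((n.choose m : ℝ) - (n - m).choose m) / n.choose m
      = m * ∑ l ∈ Icc 1 m, (1 / ((n : ℝ) - m + l)) *
          ∏ k ∈ Icc 1 (l - 1), (((n : ℝ) - 2 * m + k) / ((n : ℝ) - m + k)) := by
  have hchoose : (n.choose m : ℝ) ≠ 0 := by exact_mod_cast (Nat.choose_pos hmn).ne'
  rw [sub_div, div_self hchoose, choose_sub_div_choose_eq_prod hmn, one_sub_prod_Icc_eq_sum,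
    mul_sum]
  refine sum_congr rfl fun l hl ↦ ?_
  have hden : (0 : ℝ) < n - m + l := by
    have : (m : ℝ) ≤ n := by exact_mod_cast hmn
    have : (1 : ℝ) ≤ l := by exact_mod_cast (mem_Icc.mp hl).1
    linarith
  have hfactor : 1 - ((n : ℝ) - 2 * m + l) / (n - m + l) = m / (n - m + l) := by
    field_simp
    ring
  rw [hfactor]
  ring

theorem choose_ratio_factor_mem_Icc (h2m : 2 * m ≤ n) (k : ℕ) :
    ((n : ℝ) - 2 * m + k) / ((n : ℝ) - m + k) ∈ Set.Icc 0 1 := by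
  have : (2 * m : ℝ) ≤ n := by exact_mod_cast h2m
  have hk : (0 : ℝ) ≤ k := k.cast_nonneg
  have hm : (0 : ℝ) ≤ m := m.cast_nonneg
  exact ⟨div_nonneg (by linarith) (by linarith), div_le_one_of_le₀ (by linarith) (by linarith)⟩

theorem sum_choose_ratio_terms_le (h2m : 2 * m ≤ n) :
    ∑ l ∈ Icc 1 m, (1 / ((n : ℝ) - m + l)) *
        ∏ k ∈ Icc 1 (l - 1), (((n : ℝ) - 2 * m + k) / ((n : ℝ) - m + k))
      ≤ m / ((n : ℝ) - m) := by
  have hbound : ∀ l ∈ Icc 1 m, (1 / ((n : ℝ) - m + l)) *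
      ∏ k ∈ Icc 1 (l - 1), (((n : ℝ) - 2 * m + k) / ((n : ℝ) - m + k)) ≤ 1 / ((n : ℝ) - m) := by
    intro l hl
    obtain ⟨hl1, hlm⟩ : (1 : ℝ) ≤ l ∧ (l : ℝ) ≤ m := by exact_mod_cast mem_Icc.mp hl
    have : (2 * m : ℝ) ≤ n := by exact_mod_cast h2m
    have hfactors := fun k (_ : k ∈ Icc 1 (l - 1)) ↦ choose_ratio_factor_mem_Icc h2m k
    calc (1 / ((n : ℝ) - m + l)) *
          ∏ k ∈ Icc 1 (l - 1), (((n : ℝ) - 2 * m + k) / ((n : ℝ) - m + k))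
        ≤ 1 / ((n : ℝ) - m + l) * 1 := by
          gcongr
          · exact (one_div_pos.mpr (by linarith)).le
          · exact prod_le_one (fun k hk ↦ (hfactors k hk).1) (fun k hk ↦ (hfactors k hk).2)
      _ ≤ 1 / ((n : ℝ) - m) := by
          rw [mul_one]
          gcongr <;> linarith
  calc _ ≤ ∑ _l ∈ Icc 1 m, 1 / ((n : ℝ) - m) := sum_le_sum hbound
    _ = m / ((n : ℝ) - m) := by simp [div_eq_mul_one_div (m : ℝ)]

end

theorem stmt_5_general (n m : ℕ) (hmn : m < n) :
    ((n.choose m : ℝ) - ((n - m).choose m : ℝ)) / (n.choose m : ℝ)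
        = (m : ℝ) * ∑ l ∈ Finset.Icc 1 m,
            (1 / ((n : ℝ) - m + l)) *
              ∏ k ∈ Finset.Icc 1 (l - 1), (((n : ℝ) - 2 * m + k) / ((n : ℝ) - m + k)) ∧
      ((n.choose m : ℝ) - ((n - m).choose m : ℝ)) / (n.choose m : ℝ)
        ≤ (m : ℝ) ^ 2 / ((n : ℝ) - m) := by
  have hid := one_sub_choose_div_choose_eq_sum hmn.le
  refine ⟨hid, ?_⟩
  rcases le_or_gt (2 * m) n with h2m | h2m
  · rw [hid, pow_two, mul_div_assoc]
    exact mul_le_mul_of_nonneg_left (sum_choose_ratio_terms_le h2m) m.cast_nonneg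
  · have hm : (m : ℝ) ≤ m ^ 2 := by exact_mod_cast Nat.le_self_pow two_ne_zero m
    have hlt : (n : ℝ) < 2 * m := by exact_mod_cast h2m
    have hpos : (0 : ℝ) < n - m := by simpa using hmn
    calc _ ≤ (1 : ℝ) := div_le_one_of_le₀ (by simp) (Nat.cast_nonneg _)
      _ ≤ (m : ℝ) ^ 2 / (n - m) := by rw [one_le_div hpos]; linarith

theorem stmt_5 (n m : ℕ) (hm : 1 ≤ m) (hmn : m < n) :
    ((n.choose m : ℝ) - ((n - m).choose m : ℝ)) / (n.choose m : ℝ)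
        = (m : ℝ) * ∑ l ∈ Finset.Icc 1 m,
            (1 / ((n : ℝ) - m + l)) *
              ∏ k ∈ Finset.Icc 1 (l - 1), (((n : ℝ) - 2 * m + k) / ((n : ℝ) - m + k)) ∧
      ((n.choose m : ℝ) - ((n - m).choose m : ℝ)) / (n.choose m : ℝ)
        ≤ (m : ℝ) ^ 2 / ((n : ℝ) - m) :=
  stmt_5_general n m hmn
end

section
/- Self-bounding lemma: let f be a nonnegative bounded measurable function on a product probability space Ω = Π_k Ω_k with product measure μ, and suppose D f ≤ a² f pointwise, where Df = Σ_k (f - inf_{y∈Ω_k} S_y^k f)² and S_y^k substitutes y into the k-th coordinate. If additionally the entropy bound S_f(β) ≤ (β²/2) E_{βf}[Df] holds for all β > 0, then for all β ∈ (0, 2/a²), ln E[e^{βf}] ≤ βE[f]/(1 - a²β/2). -/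
/-!
Write `L γ = log E[e^{γ f}]`, so that `L' γ = E_{γf}[f]`, `L 0 = 0` and `L' 0 = E f`. Since
`D f ≤ a² f`, the entropy bound gives `γ L' γ - L γ ≤ (a²/2) γ² L' γ` for `γ > 0`, which says exactly
that `γ ↦ L γ / γ - (a²/2) L γ` is nonincreasing on `(0, ∞)` (Herbst's argument). Its limit at `0⁺`
is `L' 0 = E f`, so `L β / β - (a²/2) L β ≤ E f`, and this rearranges to the claim.
-/

open MeasureTheory ProbabilityTheory Filter Topology Set Real

section Herbst

variable {L L' : ℝ → ℝ} {κ : ℝ}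

lemma antitoneOn_div_sub_mul_of_sub_le (hL : ∀ γ, 0 < γ → HasDerivAt L (L' γ) γ)
    (hkey : ∀ γ, 0 < γ → γ * L' γ - L γ ≤ κ * γ ^ 2 * L' γ) :
    AntitoneOn (fun γ ↦ L γ / γ - κ * L γ) (Ioi 0) := by
  have hψ : ∀ γ ∈ Ioi (0 : ℝ),
      HasDerivAt (fun γ ↦ L γ / γ - κ * L γ) ((L' γ * γ - L γ * 1) / γ ^ 2 - κ * L' γ) γ :=
    fun γ hγ ↦ ((hL γ hγ).div (hasDerivAt_id γ) (ne_of_gt hγ)).sub ((hL γ hγ).const_mul κ)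
  refine antitoneOn_of_hasDerivWithinAt_nonpos (convex_Ioi 0)
    (f' := fun γ ↦ (L' γ * γ - L γ * 1) / γ ^ 2 - κ * L' γ)
    (fun γ hγ ↦ (hψ γ hγ).continuousAt.continuousWithinAt) (fun γ hγ ↦ ?_) fun γ hγ ↦ ?_
  · rw [interior_Ioi] at hγ
    exact (hψ γ hγ).hasDerivWithinAt
  · rw [interior_Ioi] at hγ
    have hγ2 : 0 < γ ^ 2 := pow_pos hγ 2
    rw [sub_nonpos, div_le_iff₀ hγ2]
    linarith [hkey γ hγ]

lemma tendsto_div_self_nhdsGT_zero (hL : HasDerivAt L (L' 0) 0) (hL0 : L 0 = 0) :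
    Tendsto (fun γ ↦ L γ / γ) (𝓝[>] 0) (𝓝 (L' 0)) := by
  refine hL.tendsto_slope_zero_right.congr fun γ ↦ ?_
  simp [hL0, div_eq_inv_mul]

theorem le_div_one_sub_mul_of_sub_le (hL : ∀ γ, 0 ≤ γ → HasDerivAt L (L' γ) γ) (hL0 : L 0 = 0)
    (hkey : ∀ γ, 0 < γ → γ * L' γ - L γ ≤ κ * γ ^ 2 * L' γ)
    {β : ℝ} (hβ : 0 < β) (hκβ : 0 < 1 - κ * β) :
    L β ≤ β * L' 0 / (1 - κ * β) := by
  have hanti := antitoneOn_div_sub_mul_of_sub_le (fun γ hγ ↦ hL γ hγ.le) hkey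
  have hlim : Tendsto (fun γ ↦ L γ / γ - κ * L γ) (𝓝[>] 0) (𝓝 (L' 0)) := by
    have hcont : Tendsto L (𝓝 0) (𝓝 (L 0)) := (hL 0 le_rfl).continuousAt.tendsto
    rw [hL0] at hcont
    replace hcont := hcont.mono_left (nhdsWithin_le_nhds (s := Ioi 0))
    simpa using (tendsto_div_self_nhdsGT_zero (hL 0 le_rfl) hL0).sub (hcont.const_mul κ)
  have hψβ : L β / β - κ * L β ≤ L' 0 := by
    refine ge_of_tendsto hlim ?_
    filter_upwards [Ioo_mem_nhdsGT hβ] with γ hγ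
    exact hanti hγ.1 (mem_Ioi.2 hβ) hγ.2.le
  rw [le_div_iff₀ hκβ]
  have := mul_le_mul_of_nonneg_right hψβ hβ.le
  rw [sub_mul, div_mul_cancel₀ _ hβ.ne'] at this
  linarith

end Herbst

namespace ProbabilityTheory

variable {Ω : Type*} [MeasurableSpace Ω] {μ : Measure Ω} {X : Ω → ℝ}

lemma integrableExpSet_eq_univ_of_mem_Icc [IsFiniteMeasure μ] {a b : ℝ} (hX : AEMeasurable X μ)
    (hb : ∀ᵐ ω ∂μ, X ω ∈ Icc a b) : integrableExpSet X μ = univ :=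
  eq_univ_of_forall fun _ ↦ integrable_exp_mul_of_mem_Icc hX hb

lemma hasDerivAt_cgf {t : ℝ} (h : t ∈ interior (integrableExpSet X μ)) :
    HasDerivAt (cgf X μ) (μ[fun ω ↦ X ω * exp (t * X ω)] / mgf X μ t) t := by
  rw [← deriv_cgf h]
  exact (analyticAt_cgf h).differentiableAt.hasDerivAt

end ProbabilityTheory

lemma integral_mul_exp_le_mul_integral {Ω : Type*} [MeasurableSpace Ω] {μ : Measure Ω}
    {f g : Ω → ℝ} {c γ : ℝ} (hg0 : ∀ x, 0 ≤ g x) (hgf : ∀ x, g x ≤ c * f x)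
    (hint : Integrable (fun x ↦ f x * exp (γ * f x)) μ) :
    ∫ x, g x * exp (γ * f x) ∂μ ≤ c * ∫ x, f x * exp (γ * f x) ∂μ := by
  rw [← integral_const_mul]
  refine integral_mono_of_nonneg (.of_forall fun x ↦ by have := hg0 x; positivity)
    (hint.const_mul c) (.of_forall fun x ↦ ?_)
  dsimp only
  rw [← mul_assoc]
  exact mul_le_mul_of_nonneg_right (hgf x) (exp_pos _).le

theorem stmt_13_general {n : ℕ} {Ω : Fin n → Type*} [∀ k, MeasurableSpace (Ω k)]
    (μ : ∀ k, Measure (Ω k)) [∀ k, IsProbabilityMeasure (μ k)]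
    (f : (∀ k, Ω k) → ℝ) (hf : Measurable f) (hf0 : ∀ x, 0 ≤ f x)
    (C : ℝ) (hb : ∀ x, f x ≤ C) (a : ℝ)
    (hDf : ∀ x, (∑ k, (f x - ⨅ y : Ω k, f (Function.update x k y)) ^ 2) ≤ a ^ 2 * f x)
    (hent : ∀ β : ℝ, 0 < β →
      β * ((∫ x, f x * Real.exp (β * f x) ∂(Measure.pi μ))
            / ∫ x, Real.exp (β * f x) ∂(Measure.pi μ))
          - Real.log (∫ x, Real.exp (β * f x) ∂(Measure.pi μ))
        ≤ β ^ 2 / 2 *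
          ((∫ x, (∑ k, (f x - ⨅ y : Ω k, f (Function.update x k y)) ^ 2)
              * Real.exp (β * f x) ∂(Measure.pi μ))
            / ∫ x, Real.exp (β * f x) ∂(Measure.pi μ)))
    (β : ℝ) (hβ0 : 0 < β) (hβ2 : β < 2 / a ^ 2) :
    Real.log (∫ x, Real.exp (β * f x) ∂(Measure.pi μ))
      ≤ β * (∫ x, f x ∂(Measure.pi μ)) / (1 - a ^ 2 * β / 2) := by
  set m := Measure.pi μ
  have hexp : integrableExpSet f m = univ :=
    integrableExpSet_eq_univ_of_mem_Icc hf.aemeasurable (.of_forall fun x ↦ ⟨hf0 x, hb x⟩)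
  have hint (γ : ℝ) : γ ∈ interior (integrableExpSet f m) := by simp [hexp]
  have hkey (γ : ℝ) (hγ : 0 < γ) :
      γ * ((∫ x, f x * exp (γ * f x) ∂m) / ∫ x, exp (γ * f x) ∂m) - log (∫ x, exp (γ * f x) ∂m)
        ≤ a ^ 2 / 2 * γ ^ 2 * ((∫ x, f x * exp (γ * f x) ∂m) / ∫ x, exp (γ * f x) ∂m) := by
    have hD := integral_mul_exp_le_mul_integral (μ := m) (γ := γ)
      (fun x ↦ Finset.sum_nonneg fun k _ ↦ sq_nonneg _) hDf
      (by simpa using integrable_pow_mul_exp_of_mem_interior_integrableExpSet (hint γ) 1)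
    have hZ : 0 < ∫ x, exp (γ * f x) ∂m :=
      mgf_pos (interior_subset (s := integrableExpSet f m) (hint γ))
    calc _ ≤ _ := hent γ hγ
      _ ≤ γ ^ 2 / 2 * (a ^ 2 * (∫ x, f x * exp (γ * f x) ∂m) / ∫ x, exp (γ * f x) ∂m) := by
        gcongr
      _ = _ := by ring
  have hβa : 0 < 1 - a ^ 2 / 2 * β := by
    rcases (sq_nonneg a).eq_or_lt with ha | ha
    · rw [← ha]; norm_num
    · have := (lt_div_iff₀ ha).1 hβ2
      linarith
  -- `L` is `cgf f m` written out, so that `hkey` and the goal match it syntactically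
  have hmain := le_div_one_sub_mul_of_sub_le (L := fun γ ↦ log (∫ x, exp (γ * f x) ∂m))
    (fun γ _ ↦ hasDerivAt_cgf (hint γ)) cgf_zero hkey hβ0 hβa
  simpa only [zero_mul, exp_zero, mul_one, mgf_zero, div_one, div_mul_eq_mul_div] using hmain

theorem stmt_13 {n : ℕ} {Ω : Fin n → Type*} [∀ k, MeasurableSpace (Ω k)]
    [∀ k, Nonempty (Ω k)]
    (μ : ∀ k, Measure (Ω k)) [∀ k, IsProbabilityMeasure (μ k)]
    (f : (∀ k, Ω k) → ℝ) (hf : Measurable f) (hf0 : ∀ x, 0 ≤ f x)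
    (C : ℝ) (hb : ∀ x, f x ≤ C) (a : ℝ)
    (hDf : ∀ x, (∑ k, (f x - ⨅ y : Ω k, f (Function.update x k y)) ^ 2) ≤ a ^ 2 * f x)
    (hent : ∀ β : ℝ, 0 < β →
      β * ((∫ x, f x * Real.exp (β * f x) ∂(Measure.pi μ))
            / ∫ x, Real.exp (β * f x) ∂(Measure.pi μ))
          - Real.log (∫ x, Real.exp (β * f x) ∂(Measure.pi μ))
        ≤ β ^ 2 / 2 *
          ((∫ x, (∑ k, (f x - ⨅ y : Ω k, f (Function.update x k y)) ^ 2)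
              * Real.exp (β * f x) ∂(Measure.pi μ))
            / ∫ x, Real.exp (β * f x) ∂(Measure.pi μ)))
    (β : ℝ) (hβ0 : 0 < β) (hβ2 : β < 2 / a ^ 2) :
    Real.log (∫ x, Real.exp (β * f x) ∂(Measure.pi μ))
      ≤ β * (∫ x, f x ∂(Measure.pi μ)) / (1 - a ^ 2 * β / 2) :=
  stmt_13_general μ f hf hf0 C hb a hDf hent β hβ0 hβ2
end

section
/- Chatterjee's variance formula: let X = (X₁,...,Xₙ) be a vector of independent random variables, X' an independent copy, X^{(k)} equal to X with X_k replaced by X'_k, and X^{[k]} = (X'₁,...,X'_k,X_{k+1},...,Xₙ). Then for bounded measurable f with E[f(X)] = 0, σ²(f(X)) = (1/2)Σ_{k=1}^n E[(f(X) - f(X^{(k)}))(f(X^{[k-1]}) - f(X^{[k]}))]. -/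
/-!
With `hybrid m (X, X') = X^{[m]}` and `A m = E[f(X) f(X^{[m]})]` (indices of `Fin n` start at
`0`, so the summand for `k` is the paper's summand `k + 1`): exchanging the `k`-th coordinates of
`X` and `X'` preserves the law of `(X, X')`, turns `X` into `X^{(k)}` and exchanges `X^{[k]}` with
`X^{[k+1]}`. Since this involution negates `f(X^{[k]}) - f(X^{[k+1]})`, the `k`-th summand is
`2 (A k - A (k + 1))`. The sum telescopes to `2 (A 0 - A n) = 2 (E[f(X)²] - E[f(X)]²)`.
-/

open MeasureTheory Set

section SwapAt

variable {ι : Type*} [DecidableEq ι] {Ω : ι → Type*}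

def swapAt (k : ι) (p : (∀ i, Ω i) × (∀ i, Ω i)) : (∀ i, Ω i) × (∀ i, Ω i) :=
  (Function.update p.1 k (p.2 k), Function.update p.2 k (p.1 k))

theorem swapAt_involutive (k : ι) : Function.Involutive (swapAt (Ω := Ω) k) := by
  intro p
  simp [swapAt]

theorem preimage_swapAt_pi_prod_pi (k : ι) (s t : ∀ i, Set (Ω i)) :
    swapAt k ⁻¹' (univ.pi s ×ˢ univ.pi t) =
      univ.pi (Function.update s k (t k)) ×ˢ univ.pi (Function.update t k (s k)) := by
  ext p
  simp only [swapAt, mem_preimage, mem_prod, mem_univ_pi, ← forall_and]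
  refine forall_congr' fun i => ?_
  rcases eq_or_ne i k with rfl | hik
  · simp [and_comm]
  · simp [hik]

variable [∀ i, MeasurableSpace (Ω i)]

theorem measurable_swapAt (k : ι) : Measurable (swapAt (Ω := Ω) k) := by
  unfold swapAt
  fun_prop

theorem measurePreserving_swapAt [Fintype ι] (μ : ∀ i, Measure (Ω i)) [∀ i, SigmaFinite (μ i)]
    (k : ι) :
    MeasurePreserving (swapAt k) ((Measure.pi μ).prod (Measure.pi μ))
      ((Measure.pi μ).prod (Measure.pi μ)) := by
  refine ⟨measurable_swapAt k, (Measure.prod_eq_generateFrom generateFrom_pi generateFrom_pi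
    isPiSystem_pi isPiSystem_pi (.pi fun i => (μ i).toFiniteSpanningSetsIn)
    (.pi fun i => (μ i).toFiniteSpanningSetsIn) ?_).symm⟩
  rintro _ ⟨s, hs, rfl⟩ _ ⟨t, ht, rfl⟩
  rw [Measure.map_apply (measurable_swapAt k) (.prod (.univ_pi fun i => hs i (mem_univ i))
    (.univ_pi fun i => ht i (mem_univ i))), preimage_swapAt_pi_prod_pi,
    Measure.prod_prod, Measure.pi_pi, Measure.pi_pi, Measure.pi_pi, Measure.pi_pi,
    ← Finset.prod_mul_distrib, ← Finset.prod_mul_distrib]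
  refine Finset.prod_congr rfl fun i _ => ?_
  rcases eq_or_ne i k with rfl | hik
  · simp [mul_comm]
  · simp [hik]

end SwapAt

theorem integral_sub_comp_mul_eq_two_mul {α : Type*} [MeasurableSpace α] {μ : Measure α}
    {T : α → α} (hT : MeasurePreserving T μ μ) (hTT : Function.Involutive T) {g h : α → ℝ}
    (hh : ∀ x, h (T x) = -h x) (hgh : Integrable (fun x => g x * h x) μ) :
    ∫ x, (g x - g (T x)) * h x ∂μ = 2 * ∫ x, g x * h x ∂μ := by
  have hcomp : (fun x => g (T x) * h x) = fun x => -(g (T x) * h (T x)) := by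
    funext x
    rw [hh, mul_neg, neg_neg]
  have hint : ∫ x, g (T x) * h (T x) ∂μ = ∫ x, g x * h x ∂μ :=
    hT.integral_comp (MeasurableEquiv.ofInvolutive T hTT hT.measurable).measurableEmbedding
      fun x => g x * h x
  have hgh' : Integrable (fun x => g (T x) * h x) μ := by
    rw [hcomp]
    exact (hT.integrable_comp_of_integrable hgh).neg
  simp only [sub_mul]
  rw [integral_sub hgh hgh', hcomp, integral_neg, hint]
  ring

theorem integrable_comp_mul_comp {α β : Type*} [MeasurableSpace α] [MeasurableSpace β]
    {ν : Measure α} [IsFiniteMeasure ν] {f : β → ℝ} (hf : Measurable f) {C : ℝ}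
    (hb : ∀ x, |f x| ≤ C) {φ ψ : α → β} (hφ : Measurable φ) (hψ : Measurable ψ) :
    Integrable (fun x => f (φ x) * f (ψ x)) ν :=
  .of_bound ((hf.comp hφ).mul (hf.comp hψ)).aestronglyMeasurable (C * C) <| ae_of_all _ fun x => by
    rw [Real.norm_eq_abs, abs_mul]
    exact mul_le_mul (hb _) (hb _) (abs_nonneg _) ((abs_nonneg (f (φ x))).trans (hb _))

section Hybrid

variable {n : ℕ} {Ω : Fin n → Type*}

def hybrid (m : ℕ) (p : (∀ i, Ω i) × (∀ i, Ω i)) : ∀ i, Ω i :=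
  fun i => if (i : ℕ) < m then p.2 i else p.1 i

theorem hybrid_zero (p : (∀ i, Ω i) × (∀ i, Ω i)) : hybrid 0 p = p.1 := rfl

theorem hybrid_of_le {m : ℕ} (hm : n ≤ m) (p : (∀ i, Ω i) × (∀ i, Ω i)) : hybrid m p = p.2 :=
  funext fun i => if_pos (i.isLt.trans_le hm)

theorem hybrid_swapAt (k : Fin n) (p : (∀ i, Ω i) × (∀ i, Ω i)) :
    hybrid k (swapAt k p) = hybrid (k + 1) p := by
  funext i
  simp only [hybrid, swapAt]
  rcases lt_trichotomy i k with hik | rfl | hki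
  · simp [hik, hik.ne, Nat.lt_succ_of_lt hik]
  · simp
  · have hki' : (k : ℕ) < i := hki
    simp [hki.ne', show ¬ (i : ℕ) < k by omega, show ¬ (i : ℕ) < k + 1 by omega]

theorem hybrid_succ_swapAt (k : Fin n) (p : (∀ i, Ω i) × (∀ i, Ω i)) :
    hybrid (k + 1) (swapAt k p) = hybrid k p := by
  conv_rhs => rw [← swapAt_involutive k p]
  exact (hybrid_swapAt k _).symm

variable [∀ i, MeasurableSpace (Ω i)]

theorem measurable_hybrid (m : ℕ) : Measurable (hybrid (Ω := Ω) m) :=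
  measurable_pi_lambda _ fun i => by
    unfold hybrid
    split_ifs <;> fun_prop

noncomputable def hybridCorrelation (μ : ∀ i, Measure (Ω i)) (f : (∀ i, Ω i) → ℝ) (m : ℕ) : ℝ :=
  ∫ p, f p.1 * f (hybrid m p) ∂(Measure.pi μ).prod (Measure.pi μ)

variable (μ : ∀ i, Measure (Ω i)) [∀ i, IsProbabilityMeasure (μ i)] (f : (∀ i, Ω i) → ℝ)

theorem hybridCorrelation_zero :
    hybridCorrelation μ f 0 = ∫ x, f x ^ 2 ∂Measure.pi μ := by
  simp only [hybridCorrelation, hybrid_zero, ← sq]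
  rw [integral_fun_fst (fun x => f x ^ 2), probReal_univ, one_smul]

theorem hybridCorrelation_of_le {m : ℕ} (hm : n ≤ m) :
    hybridCorrelation μ f m = (∫ x, f x ∂Measure.pi μ) ^ 2 := by
  simp only [hybridCorrelation, hybrid_of_le hm, integral_prod_mul, sq]

theorem integral_sub_update_mul_sub_hybrid (hf : Measurable f) {C : ℝ} (hb : ∀ x, |f x| ≤ C)
    (k : Fin n) :
    ∫ p, (f p.1 - f (Function.update p.1 k (p.2 k))) * (f (hybrid k p) - f (hybrid (k + 1) p))
        ∂(Measure.pi μ).prod (Measure.pi μ)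
      = 2 * (hybridCorrelation μ f k - hybridCorrelation μ f (k + 1)) := by
  have hint (m : ℕ) : Integrable (fun p => f p.1 * f (hybrid m p))
      ((Measure.pi μ).prod (Measure.pi μ)) :=
    integrable_comp_mul_comp hf hb measurable_fst (measurable_hybrid m)
  refine (integral_sub_comp_mul_eq_two_mul (measurePreserving_swapAt μ k) (swapAt_involutive k)
    (g := fun p => f p.1) (fun p => ?_) ?_).trans ?_
  · rw [hybrid_swapAt, hybrid_succ_swapAt, neg_sub]
  · simp only [mul_sub]
    exact (hint _).sub (hint _)
  · congr 1
    simp only [mul_sub]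
    exact integral_sub (hint _) (hint _)

end Hybrid

theorem stmt_14 {n : ℕ} {Ω : Fin n → Type*} [∀ k, MeasurableSpace (Ω k)]
    (μ : ∀ k, Measure (Ω k)) [∀ k, IsProbabilityMeasure (μ k)]
    (f : (∀ k, Ω k) → ℝ) (hf : Measurable f) (C : ℝ) (hb : ∀ x, |f x| ≤ C)
    (hmean : ∫ x, f x ∂(Measure.pi μ) = 0) :
    ∫ x, f x ^ 2 ∂(Measure.pi μ)
      = (1/2) * ∑ k : Fin n,
          ∫ p, (f p.1 - f (Function.update p.1 k (p.2 k))) *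
              (f (fun i => if (i : ℕ) < (k : ℕ) then p.2 i else p.1 i)
                - f (fun i => if (i : ℕ) ≤ (k : ℕ) then p.2 i else p.1 i))
            ∂((Measure.pi μ).prod (Measure.pi μ)) := by
  calc ∫ x, f x ^ 2 ∂(Measure.pi μ)
      = (1/2) * ∑ k : Fin n, 2 * (hybridCorrelation μ f k - hybridCorrelation μ f (k + 1)) := by
        rw [← Finset.mul_sum, Fin.sum_univ_eq_sum_range (fun m => hybridCorrelation μ f m -
          hybridCorrelation μ f (m + 1)), Finset.sum_range_sub', hybridCorrelation_zero,
          hybridCorrelation_of_le μ f le_rfl, hmean]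
        ring
    _ = _ := by
      refine congrArg _ (Finset.sum_congr rfl fun k _ => ?_)
      rw [← integral_sub_update_mul_sub_hybrid μ f hf hb k]
      unfold hybrid
      simp only [Nat.lt_add_one_iff]
end

section
/- Let X₁,...,Xₙ be independent random variables and f a bounded measurable function of (X₁,...,Xₙ). Then Σ_{k=1}^n σ²(E[f(X) | X_k]) ≤ σ²(f(X)). -/
/-!
Put `m = E f` and `g_k = E[f - m | X_k]`. In `L²(⊗ μᵢ)` the functions `x ↦ g_k(x_k)` are
pairwise orthogonal (independent coordinates, each centred), and `⟪f - m, g_k(x_k)⟫ = ‖g_k‖²`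
by the tower property. Hence `0 ≤ ‖(f - m) - ∑ g_k(x_k)‖² = ‖f - m‖² - ∑ ‖g_k‖²`.
-/

open MeasureTheory Function RealInnerProductSpace

theorem inner_toLp_eq_integral_mul {α : Type*} [MeasurableSpace α] {μ : Measure α}
    {a b : α → ℝ} (ha : MemLp a 2 μ) (hb : MemLp b 2 μ) :
    ⟪ha.toLp a, hb.toLp b⟫ = ∫ x, a x * b x ∂μ := by
  rw [L2.inner_def]
  refine integral_congr_ae ?_
  filter_upwards [ha.coeFn_toLp, hb.coeFn_toLp] with x hax hbx
  simp [hax, hbx, mul_comm]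

theorem sum_norm_sq_le_norm_sq_of_inner_eq {ι E : Type*} [Fintype ι] [NormedAddCommGroup E]
    [InnerProductSpace ℝ E] {v : ι → E} {x : E} (horth : Pairwise fun i j ↦ ⟪v i, v j⟫ = 0)
    (hx : ∀ i, ⟪x, v i⟫ = ‖v i‖ ^ 2) :
    ∑ i, ‖v i‖ ^ 2 ≤ ‖x‖ ^ 2 := by
  have hxv : ⟪x, ∑ i, v i⟫ = ∑ i, ‖v i‖ ^ 2 := by simp only [inner_sum, hx]
  have hvv : ‖∑ i, v i‖ ^ 2 = ∑ i, ‖v i‖ ^ 2 := by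
    rw [← real_inner_self_eq_norm_sq, sum_inner]
    refine Finset.sum_congr rfl fun i _ ↦ ?_
    rw [inner_sum, Finset.sum_eq_single i (fun j _ hji ↦ horth hji.symm) (by simp),
      real_inner_self_eq_norm_sq]
  linarith [norm_sub_sq_real x (∑ i, v i), sq_nonneg ‖x - ∑ i, v i‖]

theorem sum_integral_sq_le_integral_sq {α ι : Type*} [Fintype ι] [MeasurableSpace α]
    {μ : Measure α} {F : α → ℝ} {G : ι → α → ℝ} (hF : MemLp F 2 μ) (hG : ∀ i, MemLp (G i) 2 μ)
    (horth : Pairwise fun i j ↦ ∫ x, G i x * G j x ∂μ = 0)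
    (hFG : ∀ i, ∫ x, F x * G i x ∂μ = ∫ x, G i x ^ 2 ∂μ) :
    ∑ i, ∫ x, G i x ^ 2 ∂μ ≤ ∫ x, F x ^ 2 ∂μ := by
  have hnorm {a : α → ℝ} (ha : MemLp a 2 μ) : ‖ha.toLp a‖ ^ 2 = ∫ x, a x ^ 2 ∂μ := by
    rw [← real_inner_self_eq_norm_sq, inner_toLp_eq_integral_mul]
    simp only [sq]
  have := sum_norm_sq_le_norm_sq_of_inner_eq (x := hF.toLp F) (v := fun i ↦ (hG i).toLp (G i))
    (fun i j hij ↦ by simpa only [inner_toLp_eq_integral_mul] using horth hij)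
    (fun i ↦ by simpa only [inner_toLp_eq_integral_mul, hnorm] using hFG i)
  simpa only [hnorm] using this

section Product

variable {ι : Type*} [Fintype ι] [DecidableEq ι] {Ω : ι → Type*} [∀ i, MeasurableSpace (Ω i)]
  (μ : ∀ i, Measure (Ω i))

theorem measurePreserving_update [∀ i, SigmaFinite (μ i)] (k : ι) [IsProbabilityMeasure (μ k)] :
    MeasurePreserving (fun p : (∀ i, Ω i) × Ω k ↦ update p.1 k p.2)
      ((Measure.pi μ).prod (μ k)) (Measure.pi μ) := by
  refine ⟨measurable_update', (Measure.pi_eq fun s hs ↦ ?_).symm⟩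
  have hpre : (fun p : (∀ i, Ω i) × Ω k ↦ update p.1 k p.2) ⁻¹' Set.univ.pi s
      = Set.univ.pi (update s k Set.univ) ×ˢ s k := by
    ext ⟨x, y⟩
    simp only [Set.mem_preimage, Set.mem_prod, Set.mem_univ_pi,
      forall_update_iff x (p := fun i b ↦ b ∈ s i),
      forall_update_iff s (p := fun i t ↦ x i ∈ t), Set.mem_univ, true_and, and_comm]
  rw [Measure.map_apply measurable_update' (.univ_pi hs), hpre, Measure.prod_prod,
    Measure.pi_pi, ← Finset.mul_prod_erase _ _ (Finset.mem_univ k),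
    ← Finset.mul_prod_erase _ (fun i ↦ μ i (s i)) (Finset.mem_univ k)]
  simp only [update_self, measure_univ, one_mul]
  rw [mul_comm]
  congr 1
  exact Finset.prod_congr rfl fun i hi ↦ by rw [update_of_ne (Finset.ne_of_mem_erase hi)]

/-- `E[F(X) | X k = y]` for independent coordinates `X i ∼ μ i`. -/
noncomputable def coordCondExp (k : ι) (F : (∀ i, Ω i) → ℝ) (y : Ω k) : ℝ :=
  ∫ x, F (update x k y) ∂Measure.pi μ

theorem coordCondExp_comp_eval_of_ne {j k : ι} (hjk : j ≠ k) (G : Ω j → ℝ) :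
    coordCondExp μ k (fun x ↦ G (x j)) = fun _ ↦ ∫ x, G (x j) ∂Measure.pi μ := by
  ext y
  simp [coordCondExp, update_of_ne hjk]

variable [∀ i, IsProbabilityMeasure (μ i)]

theorem coordCondExp_comp_eval_self (k : ι) (G : Ω k → ℝ) :
    coordCondExp μ k (fun x ↦ G (x k)) = G := by
  ext y
  simp [coordCondExp]

theorem integral_coordCondExp (k : ι) {F : (∀ i, Ω i) → ℝ} (hF : Integrable F (Measure.pi μ)) :
    ∫ y, coordCondExp μ k F y ∂μ k = ∫ x, F x ∂Measure.pi μ := by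
  have hup := measurePreserving_update μ k
  calc ∫ y, coordCondExp μ k F y ∂μ k
      = ∫ p, F (update p.1 k p.2) ∂(Measure.pi μ).prod (μ k) :=
        (integral_prod_symm _ (hup.integrable_comp_of_integrable hF)).symm
    _ = ∫ x, F x ∂Measure.pi μ := by
        rw [← integral_map hup.measurable.aemeasurable (by rw [hup.map_eq]; exact hF.1),
          hup.map_eq]

theorem integral_mul_comp_eval (k : ι) {F : (∀ i, Ω i) → ℝ} {G : Ω k → ℝ}
    (hFG : Integrable (fun x ↦ F x * G (x k)) (Measure.pi μ)) :
    ∫ x, F x * G (x k) ∂Measure.pi μ = ∫ y, coordCondExp μ k F y * G y ∂μ k := by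
  rw [← integral_coordCondExp μ k hFG]
  simp only [coordCondExp, update_self, integral_mul_const]

theorem measurable_coordCondExp (k : ι) {F : (∀ i, Ω i) → ℝ} (hF : Measurable F) :
    Measurable (coordCondExp μ k F) :=
  ((hF.comp measurable_update').stronglyMeasurable.integral_prod_left').measurable

theorem abs_coordCondExp_le (k : ι) {F : (∀ i, Ω i) → ℝ} {B : ℝ} (hB : ∀ x, |F x| ≤ B)
    (y : Ω k) : |coordCondExp μ k F y| ≤ B := by
  simpa [coordCondExp] using norm_integral_le_of_norm_le_const (μ := Measure.pi μ)
    (Filter.Eventually.of_forall fun x ↦ (Real.norm_eq_abs _).trans_le (hB (update x k y)))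

theorem sum_integral_coordCondExp_sq_le {F : (∀ i, Ω i) → ℝ} (hF : MemLp F 2 (Measure.pi μ))
    (hcond : ∀ k, MemLp (coordCondExp μ k F) 2 (μ k)) (hF0 : ∫ x, F x ∂Measure.pi μ = 0) :
    ∑ k, ∫ y, coordCondExp μ k F y ^ 2 ∂μ k ≤ ∫ x, F x ^ 2 ∂Measure.pi μ := by
  set G : ι → (∀ i, Ω i) → ℝ := fun k x ↦ coordCondExp μ k F (x k)
  have hG k : MemLp (G k) 2 (Measure.pi μ) :=
    (hcond k).comp_measurePreserving (measurePreserving_eval μ k)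
  have hmean k : ∫ x, G k x ∂Measure.pi μ = 0 := by
    rw [← integral_coordCondExp μ k ((hG k).integrable one_le_two), coordCondExp_comp_eval_self,
      integral_coordCondExp μ k (hF.integrable one_le_two), hF0]
  have hsq k : ∫ x, G k x ^ 2 ∂Measure.pi μ = ∫ y, coordCondExp μ k F y ^ 2 ∂μ k := by
    simp only [sq]
    rw [integral_mul_comp_eval μ k ((hG k).integrable_mul (hG k)), coordCondExp_comp_eval_self]
  have horth : Pairwise fun j k ↦ ∫ x, G j x * G k x ∂Measure.pi μ = 0 := by
    intro j k hjk
    rw [integral_mul_comp_eval μ k ((hG j).integrable_mul (hG k)),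
      coordCondExp_comp_eval_of_ne μ hjk, hmean j]
    simp
  have hproj k : ∫ x, F x * G k x ∂Measure.pi μ = ∫ x, G k x ^ 2 ∂Measure.pi μ := by
    rw [hsq, integral_mul_comp_eval μ k (hF.integrable_mul (hG k))]
    simp only [sq]
  simpa only [hsq] using sum_integral_sq_le_integral_sq hF hG horth hproj

end Product

theorem stmt_16 {n : ℕ} {Ω : Fin n → Type*} [∀ k, MeasurableSpace (Ω k)]
    (μ : ∀ k, Measure (Ω k)) [∀ k, IsProbabilityMeasure (μ k)]
    (f : (∀ k, Ω k) → ℝ) (hf : Measurable f) (C : ℝ) (hb : ∀ x, |f x| ≤ C) :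
    ∑ k : Fin n,
        ∫ y, ((∫ x, f (Function.update x k y) ∂(Measure.pi μ))
            - ∫ x, f x ∂(Measure.pi μ)) ^ 2 ∂(μ k)
      ≤ ∫ x, (f x - ∫ y, f y ∂(Measure.pi μ)) ^ 2 ∂(Measure.pi μ) := by
  set m := ∫ x, f x ∂Measure.pi μ
  have hfm : Measurable fun x ↦ f x - m := hf.sub_const m
  have hfm_bdd x : |f x - m| ≤ C + |m| := (abs_sub _ _).trans (by linarith [hb x])
  have hcentered k y : coordCondExp μ k (fun x ↦ f x - m) y = coordCondExp μ k f y - m := by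
    have : Integrable (fun x ↦ f (update x k y)) (Measure.pi μ) :=
      .of_bound (hf.comp measurable_update_left).aestronglyMeasurable C (.of_forall fun x ↦ hb _)
    rw [coordCondExp, integral_sub this (integrable_const m), integral_const]
    simp [coordCondExp]
  have hmean : ∫ x, f x - m ∂Measure.pi μ = 0 := by
    rw [integral_sub (.of_bound hf.aestronglyMeasurable C (.of_forall hb)) (integrable_const m),
      integral_const]
    simp [m]
  have key := sum_integral_coordCondExp_sq_le μ
    (.of_bound hfm.aestronglyMeasurable _ (.of_forall hfm_bdd))
    (fun k ↦ .of_bound (measurable_coordCondExp μ k hfm).aestronglyMeasurable _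
      (.of_forall (abs_coordCondExp_le μ k hfm_bdd))) hmean
  simp only [hcentered] at key
  exact key
end

section
/- Bias in the Efron–Stein inequality: with X independent, X' an independent copy, X^{(k)} replacing coordinate k by X'_k and X^{(k)(i)} replacing both coordinates k and i (k ≠ i), one has E[Σ²(f)] - σ²(f) ≤ (1/4)Σ_{k≠i} E[(f(X) - f(X^{(i)}) - f(X^{(k)}) + f(X^{(k)(i)}))²], where E[Σ²(f)] = (1/2)Σ_k E[(f(X) - f(X^{(k)}))²]. -/
/-!
Write `x^(S) = S.piecewise y x` for `x` with its coordinates in `S` taken from the independent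
copy `y`, `avgOver μ S g x = E[g(x^(S))]`, and `γ S = resampleCorr μ f S = E[f(X) f(X^(S))]`.
Since `(x, y) ↦ (x^(S), y^(S))` preserves the law of `(X, X')`, `E[f(X^(S)) f(X^(T))] = γ (S ∆ T)`,
so expanding the squares gives `E[(f(X) - f(X^(k)))²] = 2 (γ ∅ - γ {k})`,
`σ²(f) = γ ∅ - γ univ` and, for `i ≠ k`, the `(k, i)` term on the right is `4 secondDiff γ ∅ i k`.

For `u = interactionPart μ i k f = (1 - avgOver μ {i}) (1 - avgOver μ {k}) f` one has
`secondDiff γ T i k = E[u · avgOver μ T u] ≤ E[u²] = secondDiff γ ∅ i k` (AM-GM under the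
integral). Hence, adding the elements of `s` one at a time, `s ↦ γ s - γ (insert k s)` drops by
at most `∑_{i ∈ s} secondDiff γ ∅ i k`; summing over `k` along a chain from `∅` to `univ`, whose
steps `γ s - γ (insert k s)` add up to `γ ∅ - γ univ`, bounds the bias by
`∑_{k ≠ i} secondDiff γ ∅ i k`.
-/

open MeasureTheory Finset

section BoundedMeasurable

variable {α β : Type*} [MeasurableSpace α] [MeasurableSpace β]

@[fun_prop]
def BoundedMeasurable (g : α → ℝ) : Prop := Measurable g ∧ ∃ C, ∀ x, |g x| ≤ C

namespace BoundedMeasurable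

@[fun_prop]
lemma add {g h : α → ℝ} (hg : BoundedMeasurable g) (hh : BoundedMeasurable h) :
    BoundedMeasurable fun x => g x + h x := by
  obtain ⟨hgm, C, hC⟩ := hg
  obtain ⟨hhm, D, hD⟩ := hh
  exact ⟨hgm.add hhm, C + D, fun x => (abs_add_le _ _).trans (add_le_add (hC x) (hD x))⟩

@[fun_prop]
lemma sub {g h : α → ℝ} (hg : BoundedMeasurable g) (hh : BoundedMeasurable h) :
    BoundedMeasurable fun x => g x - h x := by
  obtain ⟨hgm, C, hC⟩ := hg
  obtain ⟨hhm, D, hD⟩ := hh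
  exact ⟨hgm.sub hhm, C + D, fun x => (abs_sub _ _).trans (add_le_add (hC x) (hD x))⟩

@[fun_prop]
lemma mul {g h : α → ℝ} (hg : BoundedMeasurable g) (hh : BoundedMeasurable h) :
    BoundedMeasurable fun x => g x * h x := by
  obtain ⟨hgm, C, hC⟩ := hg
  obtain ⟨hhm, D, hD⟩ := hh
  refine ⟨hgm.mul hhm, C * D, fun x => ?_⟩
  rw [abs_mul]
  exact mul_le_mul (hC x) (hD x) (abs_nonneg _) ((abs_nonneg _).trans (hC x))

@[fun_prop]
lemma comp {g : β → ℝ} {φ : α → β} (hg : BoundedMeasurable g) (hφ : Measurable φ) :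
    BoundedMeasurable fun x => g (φ x) :=
  ⟨hg.1.comp hφ, hg.2.imp fun _ hC x => hC (φ x)⟩

lemma integrable {μ : Measure α} [IsFiniteMeasure μ] {g : α → ℝ} (hg : BoundedMeasurable g) :
    Integrable g μ :=
  .of_bound hg.1.aestronglyMeasurable hg.2.choose (ae_of_all _ hg.2.choose_spec)

end BoundedMeasurable

end BoundedMeasurable

section SecondDiff

variable {ι : Type*} [DecidableEq ι]

def secondDiff (γ : Finset ι → ℝ) (T : Finset ι) (i k : ι) : ℝ :=
  γ T - γ (insert i T) - γ (insert k T) + γ (insert i (insert k T))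

variable {γ : Finset ι → ℝ} (hmono : ∀ T i k, secondDiff γ T i k ≤ secondDiff γ ∅ i k)
include hmono

lemma sub_sub_le_sum_secondDiff {k : ι} {s : Finset ι} (hk : k ∉ s) :
    (γ ∅ - γ {k}) - (γ s - γ (insert k s)) ≤ ∑ i ∈ s, secondDiff γ ∅ i k := by
  induction s using Finset.induction_on with
  | empty => simp
  | insert a s ha ih =>
    have hstep := hmono s a k
    rw [secondDiff, insert_comm a k] at hstep
    rw [sum_insert ha]
    linarith [ih fun h => hk (mem_insert_of_mem h)]

lemma sum_sub_le_sum_sum_secondDiff [Fintype ι] (hnonneg : ∀ i k, 0 ≤ secondDiff γ ∅ i k) :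
    ∑ k, (γ ∅ - γ {k}) - (γ ∅ - γ univ) ≤ ∑ k, ∑ i ∈ univ \ {k}, secondDiff γ ∅ i k := by
  suffices ∀ s : Finset ι, ∑ k ∈ s, (γ ∅ - γ {k}) - (γ ∅ - γ s)
      ≤ ∑ k ∈ s, ∑ i ∈ univ \ {k}, secondDiff γ ∅ i k from this univ
  intro s
  induction s using Finset.induction_on with
  | empty => simp
  | insert a s ha ih =>
    have hsub : ∑ i ∈ s, secondDiff γ ∅ i a ≤ ∑ i ∈ univ \ {a}, secondDiff γ ∅ i a :=
      sum_le_sum_of_subset_of_nonneg (fun i hi => by simpa using ne_of_mem_of_not_mem hi ha)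
        fun i _ _ => hnonneg i a
    rw [sum_insert ha, sum_insert ha]
    linarith [sub_sub_le_sum_secondDiff hmono ha]

end SecondDiff

section Resampling

variable {ι : Type*} [DecidableEq ι] {Ω : ι → Type*}

lemma piecewise_piecewise_symmDiff (S T : Finset ι) (x y : ∀ i, Ω i) :
    T.piecewise (S.piecewise x y) (S.piecewise y x) = (symmDiff S T).piecewise y x := by
  ext i
  by_cases hS : i ∈ S <;> by_cases hT : i ∈ T <;> simp [hS, hT, Finset.mem_symmDiff]

lemma piecewise_piecewise_union (S T : Finset ι) (x y z : ∀ i, Ω i) :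
    T.piecewise z (S.piecewise y x) = (S ∪ T).piecewise (T.piecewise z y) x := by
  ext i
  by_cases hS : i ∈ S <;> by_cases hT : i ∈ T <;> simp [hS, hT]

variable [∀ i, MeasurableSpace (Ω i)]

@[fun_prop]
lemma Measurable.finset_piecewise {α : Type*} [MeasurableSpace α] (S : Finset ι)
    {F G : α → ∀ i, Ω i} (hF : Measurable F) (hG : Measurable G) :
    Measurable fun a => S.piecewise (F a) (G a) := by
  refine measurable_pi_lambda _ fun i => ?_
  by_cases hi : i ∈ S
  · simp only [Finset.piecewise_eq_of_mem _ _ _ hi]; fun_prop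
  · simp only [Finset.piecewise_eq_of_notMem _ _ _ hi]; fun_prop

def resampleSwap (S : Finset ι) : (∀ i, Ω i) × (∀ i, Ω i) ≃ᵐ (∀ i, Ω i) × (∀ i, Ω i) where
  toFun p := (S.piecewise p.2 p.1, S.piecewise p.1 p.2)
  invFun p := (S.piecewise p.2 p.1, S.piecewise p.1 p.2)
  left_inv p := by simp [Finset.piecewise_same]
  right_inv p := by simp [Finset.piecewise_same]
  measurable_toFun := by dsimp; fun_prop
  measurable_invFun := by dsimp; fun_prop

variable [Fintype ι] (μ : ∀ i, Measure (Ω i))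

lemma measurePreserving_resampleSwap [∀ i, SigmaFinite (μ i)] (S : Finset ι) :
    MeasurePreserving (resampleSwap S) ((Measure.pi μ).prod (Measure.pi μ))
      ((Measure.pi μ).prod (Measure.pi μ)) where
  measurable := (resampleSwap S).measurable
  map_eq := by
    have hspan := Measure.FiniteSpanningSetsIn.pi fun i => (μ i).toFiniteSpanningSetsIn
    refine (Measure.FiniteSpanningSetsIn.ext ?_ (isPiSystem_pi.prod isPiSystem_pi)
      (hspan.prod hspan) ?_).symm
    · exact (generateFrom_eq_prod generateFrom_pi generateFrom_pi
        hspan.isCountablySpanning hspan.isCountablySpanning).symm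
    · rintro _ ⟨_, ⟨s, -, rfl⟩, _, ⟨t, -, rfl⟩, rfl⟩
      rw [MeasurableEquiv.map_apply,
        show resampleSwap S ⁻¹' (Set.univ.pi s ×ˢ Set.univ.pi t) =
          Set.univ.pi (S.piecewise t s) ×ˢ Set.univ.pi (S.piecewise s t) by
          ext p
          simp only [resampleSwap, MeasurableEquiv.coe_mk, Equiv.coe_fn_mk, Set.mem_preimage,
            Set.mem_prod, Set.mem_univ_pi]
          simp only [Finset.piecewise, ← forall_and]
          refine forall_congr' fun i => ?_
          by_cases hi : i ∈ S <;> simp [hi, and_comm]]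
      simp_rw [Measure.prod_prod, Measure.pi_pi, ← Finset.prod_mul_distrib]
      refine Finset.prod_congr rfl fun i _ => ?_
      by_cases hi : i ∈ S <;> simp [hi, mul_comm]

lemma integral_piecewise_mul_piecewise [∀ i, SigmaFinite (μ i)] (g h : (∀ i, Ω i) → ℝ)
    (S T : Finset ι) :
    ∫ p, g (S.piecewise p.2 p.1) * h (T.piecewise p.2 p.1) ∂(Measure.pi μ).prod (Measure.pi μ)
      = ∫ p, g p.1 * h ((symmDiff S T).piecewise p.2 p.1)
          ∂(Measure.pi μ).prod (Measure.pi μ) := by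
  rw [← (measurePreserving_resampleSwap μ S).integral_comp'
    (fun p => g p.1 * h ((symmDiff S T).piecewise p.2 p.1))]
  congr 1 with p
  simp only [resampleSwap, MeasurableEquiv.coe_mk, Equiv.coe_fn_mk]
  -- `rw`, not `simp`: the `Decidable` instance inside `piecewise` depends on the set
  rw [piecewise_piecewise_symmDiff, symmDiff_symmDiff_cancel_left]

variable [∀ i, IsProbabilityMeasure (μ i)]

lemma integral_comp_piecewise (g : (∀ i, Ω i) → ℝ) (S : Finset ι) :
    ∫ p, g (S.piecewise p.2 p.1) ∂(Measure.pi μ).prod (Measure.pi μ) = ∫ x, g x ∂Measure.pi μ := by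
  simpa [resampleSwap, integral_fun_fst] using
    (measurePreserving_resampleSwap μ S).integral_comp' (fun p => g p.1)

noncomputable def avgOver (S : Finset ι) (g : (∀ i, Ω i) → ℝ) (x : ∀ i, Ω i) : ℝ :=
  ∫ y, g (S.piecewise y x) ∂Measure.pi μ

variable {μ}

@[fun_prop]
lemma BoundedMeasurable.avgOver {g : (∀ i, Ω i) → ℝ} (hg : BoundedMeasurable g) (S : Finset ι) :
    BoundedMeasurable (avgOver μ S g) := by
  obtain ⟨hgm, C, hC⟩ := hg
  refine ⟨?_, C, fun x => ?_⟩
  · exact (hgm.comp (by fun_prop : Measurable fun p : (∀ i, Ω i) × (∀ i, Ω i) =>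
      S.piecewise p.2 p.1)).stronglyMeasurable.integral_prod_right'.measurable
  · have := norm_integral_le_of_norm_le_const (μ := Measure.pi μ)
      (f := fun y => g (S.piecewise y x)) (ae_of_all _ fun y => hC (S.piecewise y x))
    simpa [_root_.avgOver] using this

lemma avgOver_empty (g : (∀ i, Ω i) → ℝ) : avgOver μ ∅ g = g := by
  ext x
  simp [avgOver]

lemma integral_mul_avgOver {g h : (∀ i, Ω i) → ℝ} (hg : BoundedMeasurable g)
    (hh : BoundedMeasurable h) (S : Finset ι) :
    ∫ x, g x * avgOver μ S h x ∂Measure.pi μ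
      = ∫ p, g p.1 * h (S.piecewise p.2 p.1) ∂(Measure.pi μ).prod (Measure.pi μ) := by
  rw [integral_prod _ (BoundedMeasurable.integrable (by fun_prop))]
  simp only [avgOver, integral_const_mul]

lemma integral_avgOver_mul {g h : (∀ i, Ω i) → ℝ} (hg : BoundedMeasurable g)
    (hh : BoundedMeasurable h) (S : Finset ι) :
    ∫ x, avgOver μ S g x * h x ∂Measure.pi μ = ∫ x, g x * avgOver μ S h x ∂Measure.pi μ := by
  simp_rw [mul_comm (avgOver μ S g _), integral_mul_avgOver hh hg, integral_mul_avgOver hg hh]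
  have := integral_piecewise_mul_piecewise μ g h S ∅
  rw [show symmDiff S (∅ : Finset ι) = S from symmDiff_bot S] at this
  simp only [piecewise_empty] at this
  simpa only [mul_comm] using this

lemma avgOver_avgOver {g : (∀ i, Ω i) → ℝ} (hg : BoundedMeasurable g) (S T : Finset ι) :
    avgOver μ S (avgOver μ T g) = avgOver μ (T ∪ S) g := by
  ext x
  calc avgOver μ S (avgOver μ T g) x
      = ∫ y, ∫ z, g ((S ∪ T).piecewise (T.piecewise z y) x) ∂Measure.pi μ ∂Measure.pi μ := by
        simp only [avgOver, piecewise_piecewise_union]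
    _ = ∫ p, g ((S ∪ T).piecewise (T.piecewise p.2 p.1) x) ∂(Measure.pi μ).prod (Measure.pi μ) := by
        rw [integral_prod]
        exact BoundedMeasurable.integrable (by fun_prop)
    _ = avgOver μ (T ∪ S) g x := by
        rw [integral_comp_piecewise μ (fun w => g ((S ∪ T).piecewise w x)), union_comm]; rfl

lemma integral_mul_avgOver_le {g : (∀ i, Ω i) → ℝ} (hg : BoundedMeasurable g) (S : Finset ι) :
    ∫ x, g x * avgOver μ S g x ∂Measure.pi μ ≤ ∫ x, g x * g x ∂Measure.pi μ := by
  have hsq₁ : Integrable (fun p : (∀ i, Ω i) × (∀ i, Ω i) => g p.1 * g p.1)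
      ((Measure.pi μ).prod (Measure.pi μ)) := BoundedMeasurable.integrable (by fun_prop)
  have hsq₂ : Integrable (fun p : (∀ i, Ω i) × (∀ i, Ω i) =>
      g (S.piecewise p.2 p.1) * g (S.piecewise p.2 p.1))
      ((Measure.pi μ).prod (Measure.pi μ)) := BoundedMeasurable.integrable (by fun_prop)
  rw [integral_mul_avgOver hg hg S]
  calc ∫ p, g p.1 * g (S.piecewise p.2 p.1) ∂(Measure.pi μ).prod (Measure.pi μ)
      ≤ ∫ p, (g p.1 * g p.1 + g (S.piecewise p.2 p.1) * g (S.piecewise p.2 p.1)) / 2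
          ∂(Measure.pi μ).prod (Measure.pi μ) :=
        integral_mono (BoundedMeasurable.integrable (by fun_prop)) ((hsq₁.add hsq₂).div_const 2)
          fun p => by nlinarith [sq_nonneg (g p.1 - g (S.piecewise p.2 p.1))]
    _ = ∫ x, g x * g x ∂Measure.pi μ := by
        rw [integral_div, integral_add hsq₁ hsq₂,
          integral_comp_piecewise μ (fun x => g x * g x),
          integral_fun_fst (fun x => g x * g x)]
        simp

lemma avgOver_add {g h : (∀ i, Ω i) → ℝ} (hg : BoundedMeasurable g) (hh : BoundedMeasurable h)
    (S : Finset ι) :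
    avgOver μ S (fun x => g x + h x) = fun x => avgOver μ S g x + avgOver μ S h x := by
  ext x
  exact integral_add (BoundedMeasurable.integrable (by fun_prop))
    (BoundedMeasurable.integrable (by fun_prop))

lemma avgOver_sub {g h : (∀ i, Ω i) → ℝ} (hg : BoundedMeasurable g) (hh : BoundedMeasurable h)
    (S : Finset ι) :
    avgOver μ S (fun x => g x - h x) = fun x => avgOver μ S g x - avgOver μ S h x := by
  ext x
  exact integral_sub (BoundedMeasurable.integrable (by fun_prop))
    (BoundedMeasurable.integrable (by fun_prop))

end Resampling

section ResampleCorr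

variable {ι : Type*} [Fintype ι] [DecidableEq ι] {Ω : ι → Type*} [∀ i, MeasurableSpace (Ω i)]
  (μ : ∀ i, Measure (Ω i)) [∀ i, IsProbabilityMeasure (μ i)]

noncomputable def resampleCorr (f : (∀ i, Ω i) → ℝ) (S : Finset ι) : ℝ :=
  ∫ p, f p.1 * f (S.piecewise p.2 p.1) ∂(Measure.pi μ).prod (Measure.pi μ)

noncomputable def interactionPart (i k : ι) (g : (∀ i, Ω i) → ℝ) (x : ∀ i, Ω i) : ℝ :=
  g x - avgOver μ {i} g x - avgOver μ {k} g x + avgOver μ {i, k} g x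

variable {μ}

@[fun_prop]
lemma BoundedMeasurable.interactionPart {g : (∀ i, Ω i) → ℝ} (hg : BoundedMeasurable g)
    (i k : ι) : BoundedMeasurable (interactionPart μ i k g) := by
  unfold _root_.interactionPart
  fun_prop

lemma integral_piecewise_mul_piecewise_eq_resampleCorr (f : (∀ i, Ω i) → ℝ)
    (S T : Finset ι) :
    ∫ p, f (S.piecewise p.2 p.1) * f (T.piecewise p.2 p.1) ∂(Measure.pi μ).prod (Measure.pi μ)
      = resampleCorr μ f (symmDiff S T) :=
  integral_piecewise_mul_piecewise μ f f S T

lemma avgOver_interactionPart {g : (∀ i, Ω i) → ℝ} (hg : BoundedMeasurable g) (T : Finset ι)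
    (i k : ι) :
    avgOver μ T (interactionPart μ i k g) = fun x => avgOver μ T g x - avgOver μ (insert i T) g x
      - avgOver μ (insert k T) g x + avgOver μ (insert i (insert k T)) g x := by
  unfold interactionPart
  simp (disch := fun_prop) only [avgOver_add, avgOver_sub, avgOver_avgOver]
  simp only [← insert_eq, insert_union]

variable {f : (∀ i, Ω i) → ℝ} (hf : BoundedMeasurable f)
include hf

lemma integral_mul_avgOver_self (S : Finset ι) :
    ∫ x, f x * avgOver μ S f x ∂Measure.pi μ = resampleCorr μ f S :=
  integral_mul_avgOver hf hf S

lemma integral_avgOver_mul_avgOver (S T : Finset ι) :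
    ∫ x, avgOver μ S f x * avgOver μ T f x ∂Measure.pi μ = resampleCorr μ f (S ∪ T) := by
  rw [integral_avgOver_mul hf (by fun_prop), avgOver_avgOver hf, integral_mul_avgOver_self hf,
    union_comm]

lemma integral_interactionPart_mul_avgOver (T : Finset ι) (i k : ι) :
    ∫ x, interactionPart μ i k f x * avgOver μ T (interactionPart μ i k f) x ∂Measure.pi μ
      = secondDiff (resampleCorr μ f) T i k := by
  rw [avgOver_interactionPart hf]
  simp only [interactionPart, sub_mul, add_mul, mul_sub, mul_add]
  simp (disch := apply BoundedMeasurable.integrable; fun_prop) only [integral_add, integral_sub]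
  simp only [integral_mul_avgOver_self hf, integral_avgOver_mul_avgOver hf, ← insert_eq,
    insert_union, insert_idem, insert_comm k i]
  rw [secondDiff]
  ring

lemma secondDiff_resampleCorr_le (T : Finset ι) (i k : ι) :
    secondDiff (resampleCorr μ f) T i k ≤ secondDiff (resampleCorr μ f) ∅ i k := by
  rw [← integral_interactionPart_mul_avgOver hf, ← integral_interactionPart_mul_avgOver hf,
    avgOver_empty]
  exact integral_mul_avgOver_le (by fun_prop) T

lemma secondDiff_resampleCorr_nonneg (i k : ι) : 0 ≤ secondDiff (resampleCorr μ f) ∅ i k := by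
  rw [← integral_interactionPart_mul_avgOver hf, avgOver_empty]
  exact integral_nonneg fun x => mul_self_nonneg _

lemma integral_sq_sub_integral :
    ∫ x, (f x - ∫ y, f y ∂Measure.pi μ) ^ 2 ∂Measure.pi μ
      = resampleCorr μ f ∅ - resampleCorr μ f univ := by
  obtain ⟨hfm, C, hC⟩ := hf
  rw [← ProbabilityTheory.variance_eq_integral hfm.aemeasurable,
    ProbabilityTheory.variance_eq_sub (.of_bound hfm.aestronglyMeasurable C (ae_of_all _ hC))]
  simp [resampleCorr, integral_fun_fst (fun x => f x * f x), integral_prod_mul, sq]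

lemma integral_sq_sub_update (k : ι) :
    ∫ p, (f p.1 - f (Function.update p.1 k (p.2 k))) ^ 2 ∂(Measure.pi μ).prod (Measure.pi μ)
      = 2 * (resampleCorr μ f ∅ - resampleCorr μ f {k}) := by
  calc _ = ∫ p, (f ((∅ : Finset ι).piecewise p.2 p.1) - f (({k} : Finset ι).piecewise p.2 p.1)) ^ 2
          ∂(Measure.pi μ).prod (Measure.pi μ) := by
        simp only [piecewise_empty, piecewise_singleton]
    _ = _ := by
      simp only [sq, sub_mul, mul_sub]
      simp (disch := apply BoundedMeasurable.integrable; fun_prop) only [integral_sub]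
      simp only [integral_piecewise_mul_piecewise_eq_resampleCorr, ← bot_eq_empty, symmDiff_self,
        symmDiff_bot, bot_symmDiff]
      ring

lemma integral_sq_secondDiff_update {i k : ι} (hik : i ≠ k) :
    ∫ p, (f p.1 - f (Function.update p.1 i (p.2 i)) - f (Function.update p.1 k (p.2 k))
          + f (Function.update (Function.update p.1 k (p.2 k)) i (p.2 i))) ^ 2
        ∂(Measure.pi μ).prod (Measure.pi μ)
      = 4 * secondDiff (resampleCorr μ f) ∅ i k := by
  calc _ = ∫ p, (f ((∅ : Finset ι).piecewise p.2 p.1) - f (({i} : Finset ι).piecewise p.2 p.1)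
          - f (({k} : Finset ι).piecewise p.2 p.1) + f (({i, k} : Finset ι).piecewise p.2 p.1)) ^ 2
          ∂(Measure.pi μ).prod (Measure.pi μ) := by
        simp only [piecewise_empty, piecewise_insert, piecewise_singleton]
    _ = _ := by
      simp only [sq, sub_mul, mul_sub, add_mul, mul_add]
      simp (disch := apply BoundedMeasurable.integrable; fun_prop) only [integral_add, integral_sub]
      obtain ⟨h₁, h₂, h₃, h₄, h₅, h₆⟩ : symmDiff ({i} : Finset ι) {k} = {i, k} ∧
          symmDiff ({k} : Finset ι) {i} = {i, k} ∧ symmDiff ({i} : Finset ι) {i, k} = {k} ∧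
          symmDiff ({i, k} : Finset ι) {i} = {k} ∧ symmDiff ({k} : Finset ι) {i, k} = {i} ∧
          symmDiff ({i, k} : Finset ι) {k} = {i} := by
        refine ⟨?_, ?_, ?_, ?_, ?_, ?_⟩ <;> ext l <;>
          simp only [mem_symmDiff, mem_insert, mem_singleton] <;> grind
      simp only [secondDiff, LawfulSingleton.insert_empty_eq,
        integral_piecewise_mul_piecewise_eq_resampleCorr, h₁, h₂, h₃, h₄, h₅, h₆]
      simp only [← bot_eq_empty, symmDiff_self, symmDiff_bot, bot_symmDiff]
      ring

end ResampleCorr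

theorem stmt_17 {n : ℕ} {Ω : Fin n → Type*} [∀ k, MeasurableSpace (Ω k)]
    (μ : ∀ k, Measure (Ω k)) [∀ k, IsProbabilityMeasure (μ k)]
    (f : (∀ k, Ω k) → ℝ) (hf : Measurable f) (C : ℝ) (hb : ∀ x, |f x| ≤ C) :
    (1/2) * (∑ k : Fin n,
          ∫ p, (f p.1 - f (Function.update p.1 k (p.2 k))) ^ 2
            ∂((Measure.pi μ).prod (Measure.pi μ)))
        - ∫ x, (f x - ∫ y, f y ∂(Measure.pi μ)) ^ 2 ∂(Measure.pi μ)
      ≤ (1/4) * ∑ k : Fin n, ∑ i ∈ Finset.univ \ {k},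
          ∫ p, (f p.1 - f (Function.update p.1 i (p.2 i))
                - f (Function.update p.1 k (p.2 k))
                + f (Function.update (Function.update p.1 k (p.2 k)) i (p.2 i))) ^ 2
            ∂((Measure.pi μ).prod (Measure.pi μ)) := by
  have hfb : BoundedMeasurable f := ⟨hf, C, hb⟩
  rw [sum_congr rfl fun k _ => integral_sq_sub_update hfb k, integral_sq_sub_integral hfb,
    sum_congr rfl fun k _ => sum_congr rfl fun i hi =>
      integral_sq_secondDiff_update hfb (by simpa using hi)]
  calc 1 / 2 * ∑ k, 2 * (resampleCorr μ f ∅ - resampleCorr μ f {k})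
        - (resampleCorr μ f ∅ - resampleCorr μ f univ)
      = ∑ k, (resampleCorr μ f ∅ - resampleCorr μ f {k})
          - (resampleCorr μ f ∅ - resampleCorr μ f univ) := by
        rw [← mul_sum]; ring
    _ ≤ ∑ k, ∑ i ∈ univ \ {k}, secondDiff (resampleCorr μ f) ∅ i k :=
        sum_sub_le_sum_sum_secondDiff (secondDiff_resampleCorr_le hfb)
          (secondDiff_resampleCorr_nonneg hfb)
    _ = 1 / 4 * ∑ k, ∑ i ∈ univ \ {k}, 4 * secondDiff (resampleCorr μ f) ∅ i k := by
        simp only [← mul_sum]; ring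
end
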